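/- arXiv:2110.08587 — 4 statements merged into one kernel-verified Lean document; each statement's English description precedes it below -/
import Mathlib

section
/- For every integer b and every choice of signs ε₀, ε₂ ∈ {1, -1}, the quadratic polynomial ε₂x^2 - 8b·x + 10ε₀ is irreducible over ℚ. -/
/-! The polynomial is Eisenstein at 2 over ℤ, with unit leading coefficient, hence irreducible over ℚ by Gauss's lemma. -/

open Polynomial

theorem Polynomial.IsEisensteinAt.irreducible_map_intCast {f : ℤ[X]} {p : ℤ} (hp : Prime p)
    (hf : f.IsEisensteinAt (Ideal.span {p})) (hu : f.IsPrimitive) (hd : 0 < f.natDegree) :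
    Irreducible (f.map (Int.castRingHom ℚ)) :=
  (IsPrimitive.Int.irreducible_iff_irreducible_map_cast hu).1 <|
    hf.irreducible ((Ideal.span_singleton_prime hp.ne_zero).2 hp) hu hd

theorem irreducible_quadratic_of_eisenstein {p a b c : ℤ} (hp : Prime p) (ha : IsUnit a)
    (hb : p ∣ b) (hc : p ∣ c) (hc2 : ¬ p ^ 2 ∣ c) :
    Irreducible (C (a : ℚ) * X ^ 2 + C (b : ℚ) * X + C (c : ℚ)) := by
  set f : ℤ[X] := C a * X ^ 2 + C b * X + C c
  have hcoeff : f.coeff 0 = c ∧ f.coeff 1 = b ∧ f.coeff 2 = a := by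
    simp only [f, coeff_add, coeff_C_mul, coeff_X_pow, coeff_X, coeff_C]; norm_num
  have hdeg : f.natDegree = 2 := by
    unfold f; compute_degree!; exact ha.ne_zero
  have hlead : f.leadingCoeff = a := by rw [leadingCoeff, hdeg, hcoeff.2.2]
  have hf : f.IsEisensteinAt (Ideal.span {p}) := by
    refine ⟨?_, fun {n} hn => ?_, ?_⟩
    · rw [hlead, Ideal.mem_span_singleton]
      exact fun h => hp.not_isUnit (isUnit_of_dvd_unit h ha)
    · rw [hdeg] at hn
      interval_cases n <;> simpa [hcoeff, Ideal.mem_span_singleton]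
    · simpa [hcoeff, Ideal.span_singleton_pow, Ideal.mem_span_singleton]
  have hu : f.IsPrimitive := fun r hr =>
    isUnit_of_dvd_unit (hlead ▸ (C_dvd_iff_dvd_coeff r f).1 hr f.natDegree) ha
  simpa [f] using hf.irreducible_map_intCast hp hu (by omega)

theorem stmt_2 (b ε₀ ε₂ : ℤ) (h₀ : ε₀ = 1 ∨ ε₀ = -1) (h₂ : ε₂ = 1 ∨ ε₂ = -1) :
    Irreducible (C (ε₂ : ℚ) * X ^ 2 - C ((8 * b : ℤ) : ℚ) * X + C ((10 * ε₀ : ℤ) : ℚ) : ℚ[X]) := by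
  have hε₂ : IsUnit ε₂ := by rcases h₂ with rfl | rfl <;> simp
  have h4 : ¬ (2 : ℤ) ^ 2 ∣ 10 * ε₀ := by rcases h₀ with rfl | rfl <;> decide
  rw [sub_eq_add_neg, ← neg_mul, ← C_neg, ← Int.cast_neg]
  exact irreducible_quadratic_of_eisenstein Int.prime_two hε₂ (dvd_neg.2 ⟨4 * b, by ring⟩)
    ⟨5 * ε₀, by ring⟩ h4
end

section
/- For every integer b and signs ε₀, ε₂ ∈ {1, -1}, the polynomial ε₂x^2 - 32b·x + 136ε₀ is irreducible over ℚ. -/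
/-!
Multiplying by ε₂ = ε₂⁻¹ turns the polynomial into the monic integer quadratic
x² + 4ax + 8c with a = -8bε₂ and c = 17ε₀ε₂ odd, so a rational root would be an integer.
No integer n has n² + 4an + 8c = 0: n must be even, then divisible by 4, and then
(n² + 4an + 8c) / 8 is odd.
-/

open Polynomial

theorem Int.sq_add_four_mul_mul_add_eight_mul_ne_zero (a n : ℤ) {c : ℤ} (hc : Odd c) :
    n ^ 2 + 4 * a * n + 8 * c ≠ 0 := by
  intro h
  obtain ⟨m, rfl | rfl⟩ := Int.even_or_odd' n
  · obtain ⟨k, rfl | rfl⟩ := Int.even_or_odd' m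
    · obtain ⟨d, rfl⟩ := hc
      have : 8 * (2 * (k ^ 2 + a * k + d) + 1) = 0 := by linear_combination h
      omega
    · have : 4 * (2 * (2 * k ^ 2 + 2 * k + 2 * a * k + a + c) + 1) = 0 := by linear_combination h
      omega
  · have : 2 * (2 * m ^ 2 + 2 * m + 4 * a * m + 2 * a + 4 * c) + 1 = 0 := by linear_combination h
    omega

theorem Rat.exists_intCast_eq_of_sq_add_mul_add_eq_zero {x : ℚ} (p q : ℤ)
    (hx : x ^ 2 + p * x + q = 0) : ∃ n : ℤ, x = n := by
  have hint : IsIntegral ℤ x := by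
    refine ⟨X ^ 2 + C p * X + C q, by monicity!, ?_⟩
    rw [← aeval_def]
    simpa using hx
  obtain ⟨n, rfl⟩ := IsIntegrallyClosed.isIntegral_iff.mp hint
  exact ⟨n, rfl⟩

theorem Rat.sq_add_four_mul_mul_add_eight_mul_ne_zero (a : ℤ) {c : ℤ} (hc : Odd c) (x : ℚ) :
    x ^ 2 + 4 * a * x + 8 * c ≠ 0 := by
  intro hx
  obtain ⟨n, rfl⟩ := Rat.exists_intCast_eq_of_sq_add_mul_add_eq_zero (4 * a) (8 * c)
    (by push_cast; exact hx)
  exact Int.sq_add_four_mul_mul_add_eight_mul_ne_zero a n hc (by exact_mod_cast hx)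

theorem stmt_3 (b ε₀ ε₂ : ℤ) (h₀ : ε₀ = 1 ∨ ε₀ = -1) (h₂ : ε₂ = 1 ∨ ε₂ = -1) :
    Irreducible (C (ε₂ : ℚ) * X ^ 2 - C ((32 * b : ℤ) : ℚ) * X + C ((136 * ε₀ : ℤ) : ℚ) : ℚ[X]) := by
  have hε₂ : (ε₂ : ℚ) * ε₂ = 1 := by rcases h₂ with rfl | rfl <;> norm_num
  have hodd : Odd (17 * ε₀ * ε₂) := by
    rcases h₀ with rfl | rfl <;> rcases h₂ with rfl | rfl <;> decide
  refine irreducible_of_degree_le_three_of_not_isRoot ?_ fun x hx ↦ ?_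
  · rw [show natDegree _ = 2 by compute_degree!; rcases h₂ with rfl | rfl <;> decide]
    decide
  · refine Rat.sq_add_four_mul_mul_add_eight_mul_ne_zero (-8 * b * ε₂) hodd x ?_
    simp only [IsRoot, eval_add, eval_sub, eval_mul, eval_C, eval_X, eval_pow] at hx
    push_cast at hx ⊢
    linear_combination ε₂ * hx - x ^ 2 * hε₂
end

section
/- The polynomial g₁(x, 4, 7) = x^4 + 44x^3 + 594x^2 + 2970x + 4290 is irreducible over ℚ. -/
/-! The polynomial is Eisenstein at 11: the lower coefficients are `11 * (4, 54, 270, 390)` and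
`11 ∤ 390`. Being monic over `ℤ`, it stays irreducible over `ℚ` by Gauss's lemma. -/

open Polynomial

theorem Polynomial.Monic.irreducible_map_rat_of_eisenstein {f : ℤ[X]} (hf : f.Monic)
    (hdeg : 0 < f.natDegree) {p : ℤ} (hp : Prime p)
    (hdvd : ∀ n < f.natDegree, p ∣ f.coeff n) (hsq : ¬p ^ 2 ∣ f.coeff 0) :
    Irreducible (f.map (algebraMap ℤ ℚ)) := by
  have hP : (Ideal.span {p}).IsPrime := (Ideal.span_singleton_prime hp.ne_zero).2 hp
  have hE : f.IsEisensteinAt (Ideal.span {p}) :=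
    ⟨by rw [hf.leadingCoeff, Ideal.mem_span_singleton]; exact hp.not_dvd_one,
      fun hn => Ideal.mem_span_singleton.2 (hdvd _ hn),
      by rwa [Ideal.span_singleton_pow, Ideal.mem_span_singleton]⟩
  exact hf.irreducible_iff_irreducible_map_fraction_map.1 (hE.irreducible hP hf.isPrimitive hdeg)

theorem stmt_9 :
    Irreducible (X ^ 4 + C (44 : ℚ) * X ^ 3 + C 594 * X ^ 2 + C 2970 * X + C 4290 : ℚ[X]) := by
  set f : ℤ[X] := X ^ 4 + C (44 : ℤ) * X ^ 3 + C 594 * X ^ 2 + C 2970 * X + C 4290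
  have hdeg : f.natDegree = 4 := by simp only [f]; compute_degree!
  have hmonic : f.Monic := by simp only [f]; monicity!
  have hmap : f.map (algebraMap ℤ ℚ) =
      X ^ 4 + C (44 : ℚ) * X ^ 3 + C 594 * X ^ 2 + C 2970 * X + C 4290 := by
    simp only [f, Polynomial.map_add, Polynomial.map_mul, Polynomial.map_pow, map_X, map_C,
      algebraMap_int_eq, Int.coe_castRingHom, Int.cast_ofNat]
  rw [← hmap]
  refine hmonic.irreducible_map_rat_of_eisenstein (by omega) (p := 11)
    (Int.prime_iff_natAbs_prime.2 (by norm_num)) (fun n hn => ?_) (by simp [f])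
  rw [hdeg] at hn
  interval_cases n <;> simp [f, coeff_X]
end

section
/- The polynomial g₁(x, 10, 4) = Σ_{j=0}^{10} (10!/j!)·C(14−j, 10−j)·x^j has no irreducible factor of degree 5 over ℚ. -/
/-!
Reduce modulo the prime `9967`: there `g₁(x, 10, 4)` is a product of five quadratics, each
irreducible because its discriminant is a non-residue (Euler's criterion). Every divisor of a
product of irreducible polynomials of even degree has even degree. By Gauss's lemma a monic
factor of `g₁` over `ℚ` comes from a monic factor over `ℤ` of the same degree, and reducing it
modulo `9967` keeps its degree, so every factor of `g₁(x, 10, 4)` over `ℚ` has even degree.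
-/

open Polynomial Finset

open Nat in
noncomputable def g₁ (n s : ℕ) : ℤ[X] :=
  ∑ j ∈ range (n + 1), C ((n ! / j ! * (n + s - j).choose (n - j) : ℕ) : ℤ) * X ^ j

theorem g₁_monic (n s : ℕ) : (g₁ n s).Monic := by
  rw [g₁, sum_range_succ, Nat.div_self n.factorial_pos, Nat.add_sub_cancel_left, Nat.sub_self,
    Nat.choose_zero_right, one_mul, Nat.cast_one, C_1, one_mul, add_comm, Finset.sum_range]
  exact monic_X_pow_add (degree_sum_fin_lt _)

theorem g₁_map (n s : ℕ) {R : Type*} [CommRing R] (f : ℤ →+* R) :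
    (g₁ n s).map f = ∑ j ∈ range (n + 1),
      C ((n.factorial / j.factorial * (n + s - j).choose (n - j) : ℕ) : R) * X ^ j := by
  simp only [g₁, Polynomial.map_sum, Polynomial.map_mul, Polynomial.map_pow, map_X, map_natCast,
    Polynomial.map_natCast]

theorem g₁_ten_four : g₁ 10 4 = X ^ 10 + 50 * X ^ 9 + 1350 * X ^ 8 + 25200 * X ^ 7 +
    352800 * X ^ 6 + 3810240 * X ^ 5 + 31752000 * X ^ 4 + 199584000 * X ^ 3 +
    898128000 * X ^ 2 + 2594592000 * X + 3632428800 := by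
  simp only [g₁, sum_range_succ, sum_range_zero]
  norm_num [Nat.factorial, Nat.choose_eq_factorial_div_factorial]
  ring

section Field

variable {K : Type*} [Field K]

theorem even_natDegree_of_dvd_prod {s : Multiset K[X]}
    (hs : ∀ Q ∈ s, Irreducible Q ∧ Even Q.natDegree) {A : K[X]} (hA : A ∣ s.prod) :
    Even A.natDegree := by
  induction s using Multiset.induction_on generalizing A with
  | empty =>
    rw [Multiset.prod_zero] at hA
    simp [natDegree_eq_zero_of_isUnit (isUnit_of_dvd_one hA)]
  | cons Q s ih =>
    obtain ⟨⟨hQ, hQ_even⟩, hs⟩ := Multiset.forall_mem_cons.mp hs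
    rw [Multiset.prod_cons] at hA
    by_cases hQA : Q ∣ A
    · obtain ⟨B, rfl⟩ := hQA
      have hB : B ∣ s.prod := (mul_dvd_mul_iff_left hQ.ne_zero).mp hA
      have hB0 : B ≠ 0 :=
        ne_zero_of_dvd_ne_zero (Multiset.prod_ne_zero fun h0 => (hs 0 h0).1.ne_zero rfl) hB
      rw [natDegree_mul hQ.ne_zero hB0]
      exact hQ_even.add (ih hs hB)
    · exact ih hs ((hQ.coprime_iff_not_dvd.mpr hQA).symm.dvd_of_dvd_mul_left hA)

theorem natDegree_X_sq_add_C_mul_X_add_C (b c : K) :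
    (X ^ 2 + C b * X + C c).natDegree = 2 := by
  compute_degree!

theorem irreducible_X_sq_add_C_mul_X_add_C {b c : K} (h : ¬IsSquare (discrim 1 b c)) :
    Irreducible (X ^ 2 + C b * X + C c) := by
  refine irreducible_of_degree_le_three_of_not_isRoot
    (by rw [natDegree_X_sq_add_C_mul_X_add_C]; decide) fun x hx => ?_
  refine quadratic_ne_zero_of_discrim_ne_sq (fun s hs => h ⟨s, by rw [hs, sq]⟩) x ?_
  simpa [sq] using hx

end Field

theorem ZMod.not_isSquare_of_pow_div_two_eq_neg_one {p : ℕ} [Fact p.Prime] [Fact (2 < p)]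
    {a : ZMod p} (h : a ^ (p / 2) = -1) : ¬IsSquare a := by
  have ha : a ≠ 0 := by
    rintro rfl
    rw [zero_pow (Nat.div_pos (Fact.out : 2 < p).le two_pos).ne'] at h
    exact one_ne_zero (neg_eq_zero.mp h.symm)
  rw [ZMod.euler_criterion p ha, h]
  exact ZMod.neg_one_ne_one

section GaussLemma

variable {R K : Type*} [CommRing R] [IsIntegrallyClosed R] [Field K] [Algebra R K]
  [IsFractionRing R K]

theorem exists_monic_dvd_natDegree_eq_of_dvd_map {f : R[X]} (hf : f.Monic) {g : K[X]}
    (hg : g ∣ f.map (algebraMap R K)) :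
    ∃ g' : R[X], g'.Monic ∧ g' ∣ f ∧ g'.natDegree = g.natDegree := by
  have hinj : Function.Injective (algebraMap R K) := IsFractionRing.injective R K
  have hlc : g.leadingCoeff ≠ 0 :=
    leadingCoeff_ne_zero.mpr (ne_zero_of_dvd_ne_zero (hf.map _).ne_zero hg)
  obtain ⟨g', hg'⟩ := IsIntegrallyClosed.eq_map_mul_C_of_dvd K hf hg
  have hmap_monic : (g'.map (algebraMap R K)).Monic := by
    have := congrArg leadingCoeff hg'
    rw [leadingCoeff_mul, leadingCoeff_C] at this
    exact (mul_left_eq_self₀.mp this).resolve_right hlc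
  have hg'_monic : g'.Monic := monic_of_injective hinj hmap_monic
  refine ⟨g', hg'_monic, ?_, ?_⟩
  · rw [← map_dvd_map _ hinj hg'_monic]
    exact (dvd_mul_right _ _).trans (hg' ▸ hg)
  · rw [← hg', natDegree_mul_C hlc, natDegree_map_eq_of_injective hinj]

theorem even_natDegree_of_dvd_of_map_eq_prod {F : Type*} [Field F] {f : R[X]} (hf : f.Monic)
    (φ : R →+* F) {s : Multiset F[X]} (hs : ∀ Q ∈ s, Irreducible Q ∧ Even Q.natDegree)
    (hfs : f.map φ = s.prod) {g : K[X]} (hg : g ∣ f.map (algebraMap R K)) :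
    Even g.natDegree := by
  obtain ⟨g', hg'_monic, hg'f, hdeg⟩ := exists_monic_dvd_natDegree_eq_of_dvd_map hf hg
  rw [← hdeg, ← hg'_monic.natDegree_map φ]
  exact even_natDegree_of_dvd_prod hs (hfs ▸ Polynomial.map_dvd φ hg'f)

end GaussLemma

instance : Fact (Nat.Prime 9967) := ⟨by norm_num⟩

instance : Fact (2 < 9967) := ⟨by norm_num⟩

def g₁QuadraticFactors : Multiset (ZMod 9967 × ZMod 9967) :=
  {(4319, -2576), (4297, -3840), (4790, 74), (-3407, -1759), (18, -3093)}

theorem g₁_ten_four_map_zmod_eq_prod : (g₁ 10 4).map (Int.castRingHom (ZMod 9967)) =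
    (g₁QuadraticFactors.map fun bc => X ^ 2 + C bc.1 * X + C bc.2).prod := by
  simp only [g₁QuadraticFactors, g₁_ten_four, Multiset.insert_eq_cons, Multiset.map_cons,
    Multiset.map_singleton, Multiset.prod_cons, Multiset.prod_singleton, Polynomial.map_add,
    Polynomial.map_mul, Polynomial.map_pow, Polynomial.map_ofNat, map_X, map_neg, map_ofNat]
  rw [← sub_eq_zero]
  ring_nf
  reduce_mod_char

theorem not_isSquare_discrim_of_mem_g₁QuadraticFactors :
    ∀ bc ∈ g₁QuadraticFactors, ¬IsSquare (discrim 1 bc.1 bc.2) := by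
  simp only [g₁QuadraticFactors, Multiset.insert_eq_cons, Multiset.forall_mem_cons,
    Multiset.mem_singleton, forall_eq]
  refine ⟨?_, ?_, ?_, ?_, ?_⟩ <;>
  · apply ZMod.not_isSquare_of_pow_div_two_eq_neg_one
    norm_num [discrim]
    reduce_mod_char

theorem stmt_14_general (q : ℚ[X])
    (hdvd : q ∣ (∑ j ∈ Finset.range (10 + 1),
      C (((Nat.factorial 10 / Nat.factorial j) * Nat.choose (10 + 4 - j) (10 - j) : ℕ) : ℚ) * X ^ j : ℚ[X])) :
    q.natDegree ≠ 5 := by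
  rw [← g₁_map 10 4 (algebraMap ℤ ℚ)] at hdvd
  have h_even : Even q.natDegree := by
    refine even_natDegree_of_dvd_of_map_eq_prod (g₁_monic 10 4) _ ?_
      g₁_ten_four_map_zmod_eq_prod hdvd
    simp only [Multiset.mem_map]
    rintro _ ⟨bc, hbc, rfl⟩
    exact ⟨irreducible_X_sq_add_C_mul_X_add_C
        (not_isSquare_discrim_of_mem_g₁QuadraticFactors bc hbc),
      by rw [natDegree_X_sq_add_C_mul_X_add_C]; decide⟩
  exact fun h => (by decide : ¬Even 5) (h ▸ h_even)

theorem stmt_14 (q : ℚ[X]) (hq : Irreducible q)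
    (hdvd : q ∣ (∑ j ∈ Finset.range (10 + 1),
      C (((Nat.factorial 10 / Nat.factorial j) * Nat.choose (10 + 4 - j) (10 - j) : ℕ) : ℚ) * X ^ j : ℚ[X])) :
    q.natDegree ≠ 5 :=
  stmt_14_general q hdvd
end
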